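/- arXiv:1301.0070 — 2 statements merged into one kernel-verified Lean document; each statement's English description precedes it below -/
import Mathlib

section
/- Let q = 2^m with m ≥ 1, let n be an odd positive integer, and let c ∈ F_q with c ≠ 0. Define P_c(x) = x^2 + c·x and Q(x) = ∑_{j=0}^{m-1} c^{-(2^{j+1}-1)} · ( ∑_{k=0}^{(n-1)/2} x^{q^{2k}} )^{2^j}. Then for every x ∈ F_{q^n} (not only for x in the kernel of the trace), Q(P_c(x)) = x + Tr(x). -/
/-!
In characteristic 2 the map `P_c` is additive and, since `c ∈ F_q`, commutes with `x ↦ x^q`;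
hence `Q(P_c x) = ∑_j c^{-(2^{j+1}-1)} P_c(y)^{2^j}` where `y = ∑_k x^{q^{2k}}`.
Writing `y = c z`, the `j`-th term is `c (z^{2^{j+1}} + z^{2^j})`, so the sum telescopes to
`c z^q + c z = y^q + y`.
As `n` is odd, `y^q + y = ∑_{i=0}^{n} x^{q^i} = Tr(x) + x^{q^n} = Tr(x) + x`.
-/

/-- The trace map from `F_{q^n}` to `F_q`: `Tr(x) = ∑_{i=0}^{n-1} x^{q^i}`. -/
def fieldTr {K : Type*} [Field K] (q n : ℕ) (x : K) : K :=
  ∑ i ∈ Finset.range n, x ^ q ^ i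

open Finset

theorem sum_range_two_mul {M : Type*} [AddCommMonoid M] (f : ℕ → M) (t : ℕ) :
    ∑ i ∈ range (2 * t), f i = ∑ k ∈ range t, (f (2 * k) + f (2 * k + 1)) := by
  induction t with
  | zero => simp
  | succ t ih => rw [Nat.mul_succ, sum_range_succ, sum_range_succ, sum_range_succ, ih, add_assoc]

theorem pow_pow_eq_self_of_pow_eq_self {M : Type*} [Monoid M] {c : M} {q : ℕ} (hc : c ^ q = c)
    (e : ℕ) : c ^ q ^ e = c := by
  have := Function.IsFixedPt.iterate (f := (· ^ q)) hc e
  rwa [pow_iterate] at this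

section Frobenius

variable {R : Type*} [CommRing R] {p : ℕ} [Fact p.Prime] [CharP R p]

theorem sum_pow_pow_even_add_self (x : R) (m t : ℕ) :
    (∑ k ∈ range t, x ^ (p ^ m) ^ (2 * k)) ^ p ^ m + ∑ k ∈ range t, x ^ (p ^ m) ^ (2 * k) =
      ∑ i ∈ range (2 * t), x ^ (p ^ m) ^ i := by
  rw [sum_pow_char_pow, ← sum_add_distrib, sum_range_two_mul]
  refine sum_congr rfl fun k _ => ?_
  rw [add_comm, ← pow_mul x, ← pow_succ (p ^ m)]

end Frobenius

section CharTwo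

variable {R : Type*} [CommRing R] [CharP R 2] {c : R} {m : ℕ}

theorem sq_add_mul_pow_pow (hc : c ^ 2 ^ m = c) (x : R) (e : ℕ) :
    (x ^ 2 + c * x) ^ (2 ^ m) ^ e = (x ^ (2 ^ m) ^ e) ^ 2 + c * x ^ (2 ^ m) ^ e := by
  rw [← pow_mul, add_pow_char_pow, mul_pow, pow_mul 2 m, pow_pow_eq_self_of_pow_eq_self hc]
  ring

theorem sum_sq_add_mul_pow_pow {ι : Type*} (hc : c ^ 2 ^ m = c) (s : Finset ι) (e : ι → ℕ)
    (x : R) :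
    ∑ i ∈ s, (x ^ 2 + c * x) ^ (2 ^ m) ^ e i =
      (∑ i ∈ s, x ^ (2 ^ m) ^ e i) ^ 2 + c * ∑ i ∈ s, x ^ (2 ^ m) ^ e i := by
  simp only [sq_add_mul_pow_pow hc]
  rw [sum_add_distrib, ← mul_sum, sum_pow_char]

end CharTwo

section Field

variable {K : Type*} [Field K] [CharP K 2] {c : K}

theorem inv_pow_mul_sq_add_mul_pow (hc : c ≠ 0) (y : K) (j : ℕ) :
    c⁻¹ ^ (2 ^ (j + 1) - 1) * (y ^ 2 + c * y) ^ 2 ^ j =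
      c * (c⁻¹ * y) ^ 2 ^ (j + 1) - c * (c⁻¹ * y) ^ 2 ^ j := by
  set z := c⁻¹ * y
  have hy : y ^ 2 + c * y = c ^ 2 * (z ^ 2 + z) := by
    simp only [z]; field_simp
  have hc_pow : c⁻¹ ^ (2 ^ (j + 1) - 1) * c ^ 2 ^ (j + 1) = c := by
    obtain ⟨N, hN⟩ : ∃ N, 2 ^ (j + 1) = N + 1 :=
      ⟨_, (Nat.sub_add_cancel Nat.one_le_two_pow).symm⟩
    rw [hN, Nat.add_sub_cancel, pow_succ, ← mul_assoc, inv_pow,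
      inv_mul_cancel₀ (pow_ne_zero _ hc), one_mul]
  rw [hy, mul_pow, add_pow_char_pow, ← pow_mul, ← pow_mul, ← pow_succ', ← mul_assoc, hc_pow,
    CharTwo.sub_eq_add, mul_add]

theorem sum_inv_pow_mul_sq_add_mul_pow {m : ℕ} (hc : c ≠ 0) (hcF : c ^ 2 ^ m = c) (y : K) :
    ∑ j ∈ range m, c⁻¹ ^ (2 ^ (j + 1) - 1) * (y ^ 2 + c * y) ^ 2 ^ j = y ^ 2 ^ m + y := by
  simp only [inv_pow_mul_sq_add_mul_pow hc]
  rw [sum_range_sub (fun j => c * (c⁻¹ * y) ^ 2 ^ j), pow_zero, pow_one, mul_pow, inv_pow, hcF,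
    mul_inv_cancel_left₀ hc, mul_inv_cancel_left₀ hc, CharTwo.sub_eq_add]

end Field

theorem kernel_inverse_on_whole_field_general (m n : ℕ) (hn : Odd n)
    (K : Type*) [Field K] [Fintype K] (hcard : Fintype.card K = 2 ^ (m * n))
    (c : K) (hcF : c ^ 2 ^ m = c) (hc0 : c ≠ 0)
    (P Q : K → K)
    (hP : ∀ x : K, P x = x ^ 2 + c * x)
    (hQ : ∀ x : K, Q x = ∑ j ∈ Finset.range m,
      c⁻¹ ^ (2 ^ (j + 1) - 1) *
        (∑ k ∈ Finset.range ((n - 1) / 2 + 1), x ^ (2 ^ m) ^ (2 * k)) ^ 2 ^ j) :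
    ∀ x : K, Q (P x) = x + fieldTr (2 ^ m) n x := by
  have : Fact (Nat.Prime 2) := ⟨Nat.prime_two⟩
  have : CharP K 2 := charP_of_card_eq_prime_pow hcard
  obtain ⟨t, rfl⟩ := hn
  intro x
  have hx : x ^ (2 ^ m) ^ (2 * t + 1) = x := by rw [← pow_mul, ← hcard, FiniteField.pow_card]
  have ht : (2 * t + 1 - 1) / 2 + 1 = t + 1 := by omega
  rw [hQ, hP, ht, sum_sq_add_mul_pow_pow hcF, sum_inv_pow_mul_sq_add_mul_pow hc0 hcF,
    sum_pow_pow_even_add_self, mul_add_one, sum_range_succ, hx, fieldTr, add_comm]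

/-- For `q = 2^m`, `n` odd and `c ∈ F_q^*`, with `P_c(x) = x² + c·x` and
`Q(x) = ∑_{j=0}^{m-1} c^{-(2^{j+1}-1)} (∑_{k=0}^{(n-1)/2} x^{q^{2k}})^{2^j}`, one has
`Q(P_c(x)) = x + Tr(x)` for every `x ∈ F_{q^n}`. -/
theorem kernel_inverse_on_whole_field (m n : ℕ) (hm : 1 ≤ m) (hn : Odd n)
    (K : Type*) [Field K] [Fintype K] (hcard : Fintype.card K = 2 ^ (m * n))
    (c : K) (hcF : c ^ 2 ^ m = c) (hc0 : c ≠ 0)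
    (P Q : K → K)
    (hP : ∀ x : K, P x = x ^ 2 + c * x)
    (hQ : ∀ x : K, Q x = ∑ j ∈ Finset.range m,
      c⁻¹ ^ (2 ^ (j + 1) - 1) *
        (∑ k ∈ Finset.range ((n - 1) / 2 + 1), x ^ (2 ^ m) ^ (2 * k)) ^ 2 ^ j) :
    ∀ x : K, Q (P x) = x + fieldTr (2 ^ m) n x :=
  kernel_inverse_on_whole_field_general m n hn K hcard c hcF hc0 P Q hP hQ
end

section
/- Let q = 2^m with m ≥ 1 and let n be an odd positive integer. Let L(x) = ∑_{i=0}^{N} b_i x^{2^i} be a linearized polynomial with all coefficients b_i ∈ F_q, let a ∈ F_q, and define F(x) = x·(L(Tr(x)) + a·Tr(x) + a·x) on F_{q^n}. Then Tr(F(x)) = Tr(x)·L(Tr(x)) for all x ∈ F_{q^n}. Consequently, if y ↦ y·L(y) is a bijection of F_q and g : F_q → F_q satisfies g(y·L(y)) = y for all y ∈ F_q, then g(Tr(F(x))) = Tr(x) for all x ∈ F_{q^n}. -/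
/-- The linearized polynomial `L(x) = ∑_{i=0}^{N} b_i x^{2^i}`. -/
def linPoly {K : Type*} [Field K] (N : ℕ) (b : ℕ → K) (x : K) : K :=
  ∑ i ∈ Finset.range (N + 1), b i * x ^ 2 ^ i

/-!
Since `F_q` is fixed by `x ↦ x^q` and the trace is additive, `F_q`-linear and commutes with
squaring, writing `T = Tr(x)` gives `Tr(F(x)) = L(T)·T + a·T·T + a·T²`, and the last two terms
cancel in characteristic 2. As `T ∈ F_q`, applying `g` recovers `T`.
-/

section Trace

variable {K : Type*} [Field K]

lemma pow_pow_eq_self_of_pow_eq_self_s11 {q : ℕ} {c : K} (hc : c ^ q = c) (i : ℕ) :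
    c ^ q ^ i = c := by
  induction i with
  | zero => simp
  | succ i ih => rw [pow_succ, pow_mul, ih, hc]

lemma fieldTr_mul_of_pow_eq_self {q : ℕ} (n : ℕ) {c : K} (hc : c ^ q = c) (x : K) :
    fieldTr q n (c * x) = c * fieldTr q n x := by
  simp only [fieldTr, Finset.mul_sum, mul_pow, pow_pow_eq_self_of_pow_eq_self_s11 hc]

variable (p : ℕ) [ExpChar K p]

lemma fieldTr_add (m n : ℕ) (x y : K) :
    fieldTr (p ^ m) n (x + y) = fieldTr (p ^ m) n x + fieldTr (p ^ m) n y := by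
  simp only [fieldTr, ← Finset.sum_add_distrib, ← pow_mul, add_pow_expChar_pow]

lemma fieldTr_pow_expChar (m n : ℕ) (x : K) :
    fieldTr (p ^ m) n (x ^ p) = fieldTr (p ^ m) n x ^ p := by
  simp only [fieldTr, sum_pow_char, ← pow_mul, mul_comm p]

variable {p}

lemma fieldTr_pow_eq_self {m n : ℕ} {x : K} (hx : x ^ (p ^ m) ^ n = x) :
    fieldTr (p ^ m) n x ^ p ^ m = fieldTr (p ^ m) n x := by
  have hshift := Finset.sum_range_succ' (fun i => x ^ (p ^ m) ^ i) n
  rw [Finset.sum_range_succ, hx, pow_zero, pow_one, add_left_inj] at hshift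
  rw [fieldTr, sum_pow_char_pow, hshift]
  exact Finset.sum_congr rfl fun i _ => by rw [← pow_mul, ← pow_succ]

lemma linPoly_pow_eq_self {m N : ℕ} {b : ℕ → K} (hb : ∀ i ≤ N, b i ^ p ^ m = b i) {y : K}
    (hy : y ^ p ^ m = y) : linPoly N b y ^ p ^ m = linPoly N b y := by
  unfold linPoly
  rw [sum_pow_char_pow]
  refine Finset.sum_congr rfl fun i hi => ?_
  rw [mul_pow, hb i (Nat.lt_succ_iff.mp (Finset.mem_range.mp hi)), ← pow_right_comm, hy]

end Trace

lemma fieldTr_mul_add_mul_fieldTr_add_mul {K : Type*} [Field K] [CharP K 2] {m n : ℕ} {c a x : K}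
    (hc : c ^ 2 ^ m = c) (ha : a ^ 2 ^ m = a) (hx : x ^ (2 ^ m) ^ n = x) :
    fieldTr (2 ^ m) n (x * (c + a * fieldTr (2 ^ m) n x + a * x)) = fieldTr (2 ^ m) n x * c := by
  set T := fieldTr (2 ^ m) n x
  have hT : T ^ 2 ^ m = T := fieldTr_pow_eq_self hx
  have haT : (a * T) ^ 2 ^ m = a * T := by rw [mul_pow, ha, hT]
  calc fieldTr (2 ^ m) n (x * (c + a * T + a * x))
      = fieldTr (2 ^ m) n (c * x + a * T * x + a * x ^ 2) := by ring_nf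
    _ = c * T + a * T * T + a * T ^ 2 := by
      rw [fieldTr_add 2, fieldTr_add 2, fieldTr_mul_of_pow_eq_self n hc,
        fieldTr_mul_of_pow_eq_self n haT, fieldTr_mul_of_pow_eq_self n ha, fieldTr_pow_expChar]
    _ = T * c := by rw [add_assoc, mul_assoc a, ← sq, CharTwo.add_self_eq_zero, add_zero, mul_comm]

theorem trace_of_F_general (m n : ℕ)
    (K : Type*) [Field K] [Fintype K] (hcard : Fintype.card K = 2 ^ (m * n))
    (N : ℕ) (b : ℕ → K) (hb : ∀ i ≤ N, b i ^ 2 ^ m = b i)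
    (a : K) (haF : a ^ 2 ^ m = a)
    (F : K → K)
    (hF : ∀ x : K, F x =
      x * (linPoly N b (fieldTr (2 ^ m) n x) + a * fieldTr (2 ^ m) n x + a * x)) :
    (∀ x : K, fieldTr (2 ^ m) n (F x)
        = fieldTr (2 ^ m) n x * linPoly N b (fieldTr (2 ^ m) n x))
    ∧ (Set.BijOn (fun y : K => y * linPoly N b y)
          {y : K | y ^ 2 ^ m = y} {y : K | y ^ 2 ^ m = y} →
        ∀ g : K → K, (∀ y : K, y ^ 2 ^ m = y → g (y * linPoly N b y) = y) →
        ∀ x : K, g (fieldTr (2 ^ m) n (F x)) = fieldTr (2 ^ m) n x) := by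
  have : CharP K 2 := charP_of_card_eq_prime_pow hcard
  have hpow (x : K) : x ^ (2 ^ m) ^ n = x := by rw [← pow_mul, ← hcard, FiniteField.pow_card]
  have key (x : K) := hF x ▸ fieldTr_mul_add_mul_fieldTr_add_mul
    (linPoly_pow_eq_self hb (fieldTr_pow_eq_self (hpow x))) haF (hpow x)
  refine ⟨key, fun _ g hg x => ?_⟩
  rw [key x]
  exact hg _ (fieldTr_pow_eq_self (hpow x))

/-- For `q = 2^m`, `n` odd, `L` a linearized polynomial with coefficients in `F_q`,
`a ∈ F_q`, and `F(x) = x·(L(Tr(x)) + a·Tr(x) + a·x)`, one has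
`Tr(F(x)) = Tr(x)·L(Tr(x))`.  Consequently, if `y ↦ y·L(y)` permutes `F_q` with
compositional inverse `g`, then `g(Tr(F(x))) = Tr(x)`. -/
theorem trace_of_F (m n : ℕ) (hm : 1 ≤ m) (hn : Odd n)
    (K : Type*) [Field K] [Fintype K] (hcard : Fintype.card K = 2 ^ (m * n))
    (N : ℕ) (b : ℕ → K) (hb : ∀ i ≤ N, b i ^ 2 ^ m = b i)
    (a : K) (haF : a ^ 2 ^ m = a)
    (F : K → K)
    (hF : ∀ x : K, F x =
      x * (linPoly N b (fieldTr (2 ^ m) n x) + a * fieldTr (2 ^ m) n x + a * x)) :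
    (∀ x : K, fieldTr (2 ^ m) n (F x)
        = fieldTr (2 ^ m) n x * linPoly N b (fieldTr (2 ^ m) n x))
    ∧ (Set.BijOn (fun y : K => y * linPoly N b y)
          {y : K | y ^ 2 ^ m = y} {y : K | y ^ 2 ^ m = y} →
        ∀ g : K → K, (∀ y : K, y ^ 2 ^ m = y → g (y * linPoly N b y) = y) →
        ∀ x : K, g (fieldTr (2 ^ m) n (F x)) = fieldTr (2 ^ m) n x) :=
  trace_of_F_general m n K hcard N b hb a haF F hF
end
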